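/- Assume M is invertible and w₁ ≠ 0. A twice-differentiable curve q : ℝ → ℝ^N satisfies the equations of motion M q̈(t) + α C q̇(t) + K q(t) + k_n max(wᵀq(t) − δ, 0) w = f cos(Ω t) for all t if and only if the state curve x(t) := (V q(t) − δ e₁ ; V q̇(t)) ∈ ℝ^{2N} satisfies the first-order Lure-like system ẋ(t) = A(α) x(t) + max(e₁ᵀ x(t), 0) c + δ b + cos(Ω t) b_t for all t. -/

import Mathlib

open Matrix

noncomputable section

/-- The coordinate-transformation matrix `V = [[w₁, w̄ᵀ],[0, I]]`. -/
def transMatrix {N : ℕ} (w : Fin (N + 1) → ℝ) : Matrix (Fin (N + 1)) (Fin (N + 1)) ℝ :=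
  Matrix.of fun i j => if i = 0 then w j else if i = j then 1 else 0

/-- The first standard basis vector `e₁` of `ℝ^N`. -/
def e₁ {N : ℕ} : Fin (N + 1) → ℝ := Pi.single 0 1

/-- Congruence transformation `V⁻ᵀ M V⁻¹` of a matrix `M` by `V = transMatrix w`. -/
def congrT {N : ℕ} (w : Fin (N + 1) → ℝ) (M : Matrix (Fin (N + 1)) (Fin (N + 1)) ℝ) :
    Matrix (Fin (N + 1)) (Fin (N + 1)) ℝ :=
  ((transMatrix w)⁻¹)ᵀ * M * (transMatrix w)⁻¹

/-- The constant transformed force `f̃ = −V⁻ᵀ K V⁻¹ e₁`. -/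
def ftilde {N : ℕ} (w : Fin (N + 1) → ℝ) (K : Matrix (Fin (N + 1)) (Fin (N + 1)) ℝ) :
    Fin (N + 1) → ℝ :=
  -((congrT w K).mulVec e₁)

/-- The transformed external forcing vector `f̃_t = V⁻ᵀ f`. -/
def fttilde {N : ℕ} (w : Fin (N + 1) → ℝ) (f : Fin (N + 1) → ℝ) : Fin (N + 1) → ℝ :=
  (((transMatrix w)⁻¹)ᵀ).mulVec f

/-- The Lure-like system matrix `A(α) = [[0, I],[−M̃⁻¹K̃, −α M̃⁻¹C̃]]`. -/
def Amat {N : ℕ} (w : Fin (N + 1) → ℝ) (M C K : Matrix (Fin (N + 1)) (Fin (N + 1)) ℝ)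
    (α : ℝ) : Matrix (Fin (N + 1) ⊕ Fin (N + 1)) (Fin (N + 1) ⊕ Fin (N + 1)) ℝ :=
  Matrix.fromBlocks 0 1 (-((congrT w M)⁻¹ * congrT w K)) (-(α • ((congrT w M)⁻¹ * congrT w C)))

/-- The vector `c = (0 ; −k_n M̃⁻¹ e₁)`. -/
def cvec {N : ℕ} (w : Fin (N + 1) → ℝ) (M : Matrix (Fin (N + 1)) (Fin (N + 1)) ℝ)
    (kn : ℝ) : Fin (N + 1) ⊕ Fin (N + 1) → ℝ :=
  Sum.elim 0 (-(kn • ((congrT w M)⁻¹.mulVec e₁)))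

/-- The vector `b = (0 ; M̃⁻¹ f̃)`. -/
def bvec {N : ℕ} (w : Fin (N + 1) → ℝ) (M K : Matrix (Fin (N + 1)) (Fin (N + 1)) ℝ) :
    Fin (N + 1) ⊕ Fin (N + 1) → ℝ :=
  Sum.elim 0 ((congrT w M)⁻¹.mulVec (ftilde w K))

/-- The vector `b_t = (0 ; M̃⁻¹ f̃_t)`. -/
def btvec {N : ℕ} (w : Fin (N + 1) → ℝ) (M : Matrix (Fin (N + 1)) (Fin (N + 1)) ℝ)
    (f : Fin (N + 1) → ℝ) : Fin (N + 1) ⊕ Fin (N + 1) → ℝ :=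
  Sum.elim 0 ((congrT w M)⁻¹.mulVec (fttilde w f))

/-!
In the coordinates `y = V q` the contact gap `wᵀ q − δ` becomes the first coordinate of
`y − δ e₁`, because the first row of `V` is `wᵀ`. Since `M̃⁻¹ = V M⁻¹ Vᵀ`, the velocity block of
the Lure-like vector field at `(V q − δ e₁ ; V q̇)` is `V M⁻¹` applied to the force balance of the
equations of motion, with the two `δ`-terms cancelling. The position block is `V q̇` on both sides,
so by uniqueness of derivatives the Lure-like system says exactly `V q̈ = V M⁻¹ (f cos Ω t − …)`,
which is the equation of motion once `V` and `M` are cancelled.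
-/

variable {N : ℕ}

lemma transMatrix_det (w : Fin (N + 1) → ℝ) : (transMatrix w).det = w 0 := by
  have hupper : (transMatrix w).IsUpperTriangular := by
    intro i j (hji : j < i)
    simp [transMatrix, ((Fin.zero_le j).trans_lt hji).ne', hji.ne']
  rw [det_of_isUpperTriangular hupper, Fin.prod_univ_succ]
  simp [transMatrix, Fin.succ_ne_zero]

lemma isUnit_det_transMatrix {w : Fin (N + 1) → ℝ} (hw : w 0 ≠ 0) : IsUnit (transMatrix w).det :=
  (transMatrix_det w).symm ▸ hw.isUnit

lemma transMatrix_mulVec_injective {w : Fin (N + 1) → ℝ} (hw : w 0 ≠ 0) :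
    Function.Injective (transMatrix w).mulVec :=
  mulVec_injective_of_isUnit ((isUnit_iff_isUnit_det _).mpr (isUnit_det_transMatrix hw))

lemma transMatrix_mulVec_sub_smul_e₁_zero (w x : Fin (N + 1) → ℝ) (δ : ℝ) :
    (transMatrix w *ᵥ x - δ • e₁ : Fin (N + 1) → ℝ) 0 = w ⬝ᵥ x - δ := by
  simp [transMatrix, Matrix.mulVec, e₁]

lemma transpose_transMatrix_mulVec_e₁ (w : Fin (N + 1) → ℝ) : (transMatrix w)ᵀ *ᵥ e₁ = w := by
  ext j
  simp [transMatrix, Matrix.mulVec, dotProduct, e₁, Pi.single_apply]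

section MatrixCongruence

variable {n R : Type*} [Fintype n] [DecidableEq n] [CommRing R] {V : Matrix n n R}

lemma inv_congruence (hV : IsUnit V.det) (M : Matrix n n R) : (V⁻¹ᵀ * M * V⁻¹)⁻¹ = V * M⁻¹ * Vᵀ := by
  rw [Matrix.mul_inv_rev, Matrix.mul_inv_rev, transpose_nonsing_inv, nonsing_inv_nonsing_inv _ hV,
    nonsing_inv_nonsing_inv _ (by rwa [det_transpose]), Matrix.mul_assoc]

lemma inv_congruence_mul_inv_transpose (hV : IsUnit V.det) (M : Matrix n n R) :
    (V⁻¹ᵀ * M * V⁻¹)⁻¹ * V⁻¹ᵀ = V * M⁻¹ := by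
  rw [inv_congruence hV, Matrix.mul_assoc, ← transpose_mul, nonsing_inv_mul _ hV, transpose_one,
    Matrix.mul_one]

lemma inv_congruence_mul_congruence_mul (hV : IsUnit V.det) (M X : Matrix n n R) :
    (V⁻¹ᵀ * M * V⁻¹)⁻¹ * (V⁻¹ᵀ * X * V⁻¹) * V = V * (M⁻¹ * X) := by
  rw [Matrix.mul_assoc _ _ V, Matrix.mul_assoc _ V⁻¹ V, nonsing_inv_mul _ hV, Matrix.mul_one,
    ← Matrix.mul_assoc, inv_congruence_mul_inv_transpose hV, Matrix.mul_assoc]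

lemma inv_mulVec_eq_iff {M : Matrix n n R} (hM : IsUnit M) {u v : n → R} :
    M⁻¹ *ᵥ u = v ↔ M *ᵥ v = u := by
  have hdet := (isUnit_iff_isUnit_det M).mp hM
  constructor <;> rintro rfl
  · rw [mulVec_mulVec, mul_nonsing_inv _ hdet, one_mulVec]
  · rw [mulVec_mulVec, nonsing_inv_mul _ hdet, one_mulVec]

end MatrixCongruence

lemma Sum.smul_elim {α β R M : Type*} [SMul R M] (r : R) (a : α → M) (b : β → M) :
    r • Sum.elim a b = Sum.elim (r • a) (r • b) := by
  ext (i | i) <;> rfl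

def lureState (w : Fin (N + 1) → ℝ) (δ : ℝ) (q v : Fin (N + 1) → ℝ) :
    Fin (N + 1) ⊕ Fin (N + 1) → ℝ :=
  Sum.elim (transMatrix w *ᵥ q - δ • e₁) (transMatrix w *ᵥ v)

lemma hasDerivAt_lureState (w : Fin (N + 1) → ℝ) (δ : ℝ) {q v : ℝ → Fin (N + 1) → ℝ}
    {q' v' : Fin (N + 1) → ℝ} {t : ℝ} (hq : HasDerivAt q q' t) (hv : HasDerivAt v v' t) :
    HasDerivAt (fun s => lureState w δ (q s) (v s))
      (Sum.elim (transMatrix w *ᵥ q') (transMatrix w *ᵥ v')) t := by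
  have hV {u : ℝ → Fin (N + 1) → ℝ} {u' : Fin (N + 1) → ℝ} (hu : HasDerivAt u u' t) :
      HasDerivAt (fun s => transMatrix w *ᵥ u s) (transMatrix w *ᵥ u') t :=
    (LinearMap.toContinuousLinearMap (mulVecLin (transMatrix w))).hasFDerivAt.comp_hasDerivAt t hu
  rw [hasDerivAt_pi]
  rintro (i | i)
  · exact hasDerivAt_pi.mp ((hV hq).sub_const (δ • e₁)) i
  · exact hasDerivAt_pi.mp (hV hv) i

lemma inv_transpose_transMatrix_mulVec {w : Fin (N + 1) → ℝ} (hw : w 0 ≠ 0) :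
    (transMatrix w)⁻¹ᵀ *ᵥ w = e₁ := by
  calc (transMatrix w)⁻¹ᵀ *ᵥ w = ((transMatrix w)⁻¹ᵀ * (transMatrix w)ᵀ) *ᵥ e₁ := by
        rw [← mulVec_mulVec, transpose_transMatrix_mulVec_e₁]
    _ = e₁ := by
        rw [← transpose_mul, mul_nonsing_inv _ (isUnit_det_transMatrix hw), transpose_one,
          one_mulVec]

lemma Amat_mulVec_lureState_add {w : Fin (N + 1) → ℝ} (hw : w 0 ≠ 0)
    (M C K : Matrix (Fin (N + 1)) (Fin (N + 1)) ℝ) (f : Fin (N + 1) → ℝ)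
    (α kn δ c m : ℝ) (q v : Fin (N + 1) → ℝ) :
    Amat w M C K α *ᵥ lureState w δ q v + m • cvec w M kn + δ • bvec w M K + c • btvec w M f
      = Sum.elim (transMatrix w *ᵥ v)
          (transMatrix w *ᵥ (M⁻¹ *ᵥ (c • f - (α • C *ᵥ v + K *ᵥ q + (kn * m) • w)))) := by
  have hV := isUnit_det_transMatrix hw
  have hforce : (congrT w M)⁻¹ * (transMatrix w)⁻¹ᵀ = transMatrix w * M⁻¹ :=
    inv_congruence_mul_inv_transpose hV M
  have hstiff (X : Matrix (Fin (N + 1)) (Fin (N + 1)) ℝ) :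
      (congrT w M)⁻¹ * (congrT w X * transMatrix w) = transMatrix w * (M⁻¹ * X) := by
    rw [← Matrix.mul_assoc, congrT, congrT, inv_congruence_mul_congruence_mul hV]
  simp only [lureState, Amat, cvec, bvec, btvec, ftilde, fttilde, fromBlocks_mulVec,
    Sum.elim_comp_inl, Sum.elim_comp_inr, Sum.smul_elim, ← Sum.elim_add_add, Sum.elim_eq_iff]
  refine ⟨by simp, ?_⟩
  rw [← inv_transpose_transMatrix_mulVec hw]
  simp only [Matrix.neg_mul, Matrix.smul_mul, neg_mulVec, smul_mulVec, mulVec_neg, mulVec_sub,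
    mulVec_add, mulVec_smul, mulVec_mulVec, Matrix.mul_assoc, hforce, hstiff]
  module

/-- Assume `M` is invertible and `w₁ ≠ 0`.  A twice-differentiable curve `q` satisfies the
equations of motion `M q̈ + α C q̇ + K q + k_n max(wᵀq − δ, 0) w = f cos(Ω t)` if and only if the
state curve `x(t) := (V q(t) − δ e₁ ; V q̇(t)) ∈ ℝ^{2N}` satisfies the first-order Lure-like system
`ẋ = A(α) x + max(e₁ᵀ x, 0) c + δ b + cos(Ω t) b_t`. -/
theorem eom_iff_lure_like {N : ℕ} (w : Fin (N + 1) → ℝ) (hw : w 0 ≠ 0)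
    (M C K : Matrix (Fin (N + 1)) (Fin (N + 1)) ℝ) (hM : IsUnit M) (f : Fin (N + 1) → ℝ)
    (α kn δ Ω : ℝ) (q q' q'' : ℝ → Fin (N + 1) → ℝ)
    (hq' : ∀ t, HasDerivAt q (q' t) t) (hq'' : ∀ t, HasDerivAt q' (q'' t) t) :
    (∀ t : ℝ, M.mulVec (q'' t) + α • C.mulVec (q' t) + K.mulVec (q t)
        + (kn * max (w ⬝ᵥ q t - δ) 0) • w = Real.cos (Ω * t) • f)
    ↔ (∀ t : ℝ,
        HasDerivAt
          (fun s : ℝ => Sum.elim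
            ((transMatrix w).mulVec (q s) - δ • e₁) ((transMatrix w).mulVec (q' s)))
          ((Amat w M C K α).mulVec (Sum.elim
              ((transMatrix w).mulVec (q t) - δ • e₁) ((transMatrix w).mulVec (q' t)))
            + max (((transMatrix w).mulVec (q t) - δ • e₁ : Fin (N + 1) → ℝ) 0) 0 • cvec w M kn
            + δ • bvec w M K + Real.cos (Ω * t) • btvec w M f) t) := by
  refine forall_congr' fun t => ?_
  have hstate := hasDerivAt_lureState w δ (hq' t) (hq'' t)
  change _ ↔ HasDerivAt (fun s => lureState w δ (q s) (q' s))
    (Amat w M C K α *ᵥ lureState w δ (q t) (q' t) + _ • cvec w M kn + _ + _) t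
  have hderiv (D) : HasDerivAt (fun s => lureState w δ (q s) (q' s)) D t ↔ D = _ :=
    ⟨fun h => h.unique hstate, fun h => h ▸ hstate⟩
  rw [transMatrix_mulVec_sub_smul_e₁_zero, Amat_mulVec_lureState_add hw, hderiv, Sum.elim_eq_iff,
    and_iff_right rfl, (transMatrix_mulVec_injective hw).eq_iff, inv_mulVec_eq_iff hM,
    eq_sub_iff_add_eq]
  simp only [add_assoc]
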